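/- Take p = 2. For every n ≥ 1, in F_2[ξ_1, ξ_2, …] modulo the ideal generated by {ζ_i² : i ≥ 1}, one has N_n(ξ) ≡ ζ_m if n = 2^m − 1 for some m ≥ 1, and N_n(ξ) ≡ 0 otherwise. -/
import Mathlib

open MvPolynomial

/-- The Newton polynomials `N_n ∈ R[t_1, …, t_n]`: `N_1(t) = t_1` and
`N_n(t) = t_1 N_{n−1}(t) − t_2 N_{n−2}(t) + ⋯ + (−1)^{n−2} t_{n−1} N_1(t) + (−1)^{n−1} n t_n`. -/
noncomputable def newton (R : Type*) [CommRing R] : ℕ → MvPolynomial ℕ R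
  | 0 => 0
  | (n+1) =>
      (∑ i ∈ Finset.range n, (-1 : MvPolynomial ℕ R)^i * X (i+1) * newton R (n - i))
      + (-1 : MvPolynomial ℕ R)^n * ((n+1 : ℕ) : MvPolynomial ℕ R) * X (n+1)
  decreasing_by exact Nat.lt_succ_of_le (Nat.sub_le n i)

open Classical in
/-- The substitution `t_m ↦ ξ_r` if `m = 2^r − 1` for some `r ≥ 1`, and `t_m ↦ 0`
otherwise; the variable `ξ_r` of `F_2[ξ_1, ξ_2, …]` is `X r`. -/
noncomputable def xiSub (m : ℕ) : MvPolynomial ℕ (ZMod 2) :=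
  if h : ∃ r, 1 ≤ r ∧ m = 2 ^ r - 1 then X h.choose else 0

/-- `N_n(ξ) ∈ F_2[ξ_1, ξ_2, …]`. -/
noncomputable def Nxi (n : ℕ) : MvPolynomial ℕ (ZMod 2) :=
  aeval xiSub (newton (ZMod 2) n)

/-- The conjugates `ζ_s ∈ F_2[ξ_1, ξ_2, …]`: `ζ_0 = 1` and
`ζ_s = ζ_{s−1} ξ_1^{2^{s−1}} + ζ_{s−2} ξ_2^{2^{s−2}} + ⋯ + ζ_1 ξ_{s−1}^2 + ξ_s`
(signs are immaterial in characteristic 2). -/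
noncomputable def zeta : ℕ → MvPolynomial ℕ (ZMod 2)
  | 0 => 1
  | (s+1) => ∑ i ∈ Finset.range (s+1), zeta (s - i) * (X (i+1))^(2^(s-i))
  decreasing_by omega

/-- The ideal of `F_2[ξ_1, ξ_2, …]` generated by `{ζ_i² : i ≥ 1}`. -/
noncomputable def zetaSqIdeal : Ideal (MvPolynomial ℕ (ZMod 2)) :=
  Ideal.span {x | ∃ i, 1 ≤ i ∧ x = (zeta i) ^ 2}

/-! ### Auxiliary material -/

local notation "R2" => MvPolynomial ℕ (ZMod 2)

lemma R2.two_eq_zero : (2 : R2) = 0 := CharTwo.two_eq_zero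

lemma R2.neg_one : (-1 : R2) = 1 := CharTwo.neg_eq 1

lemma pow_exp_unique {r s : ℕ} (hr : 1 ≤ r) (hs : 1 ≤ s) (h : 2^r - 1 = 2^s - 1) : r = s := by
  have h1 : 1 ≤ 2^r := Nat.one_le_two_pow
  have h2 : 1 ≤ 2^s := Nat.one_le_two_pow
  have hpow : 2^r = 2^s := by omega
  exact Nat.pow_right_injective le_rfl hpow

lemma xiSub_pow (r : ℕ) (hr : 1 ≤ r) : xiSub (2^r - 1) = X r := by
  have h : ∃ r', 1 ≤ r' ∧ 2^r - 1 = 2^r' - 1 := ⟨r, hr, rfl⟩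
  rw [xiSub, dif_pos h]
  exact congrArg X (pow_exp_unique h.choose_spec.1 hr h.choose_spec.2.symm)

lemma xiSub_zero {m : ℕ} (h : ¬ ∃ r, 1 ≤ r ∧ m = 2 ^ r - 1) : xiSub m = 0 := by
  rw [xiSub, dif_neg h]

lemma not_pow_of_even {m : ℕ} (hm : Even m) : ¬ ∃ r, 1 ≤ r ∧ m = 2 ^ r - 1 := by
  rintro ⟨r, hr, rfl⟩
  have h2 : 2 ∣ 2^r := dvd_pow_self 2 (by omega)
  have h1 : 2 ≤ 2^r := by
    calc 2 = 2^1 := (pow_one 2).symm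
    _ ≤ 2^r := Nat.pow_le_pow_right (by norm_num) hr
  obtain ⟨k, hk⟩ := hm
  omega

lemma xiSub_even {m : ℕ} (hm : Even m) : xiSub m = 0 := xiSub_zero (not_pow_of_even hm)

open Classical in
/-- `ζ_m` if `n = 2^m - 1` for some `m ≥ 1`, otherwise `0`. -/
noncomputable def Zt (m : ℕ) : R2 :=
  if h : ∃ r, 1 ≤ r ∧ m = 2 ^ r - 1 then zeta h.choose else 0

lemma Zt_pow (r : ℕ) (hr : 1 ≤ r) : Zt (2^r - 1) = zeta r := by
  have h : ∃ r', 1 ≤ r' ∧ 2^r - 1 = 2^r' - 1 := ⟨r, hr, rfl⟩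
  rw [Zt, dif_pos h]
  exact congrArg zeta (pow_exp_unique h.choose_spec.1 hr h.choose_spec.2.symm)

lemma Zt_zero {m : ℕ} (h : ¬ ∃ r, 1 ≤ r ∧ m = 2 ^ r - 1) : Zt m = 0 := by
  rw [Zt, dif_neg h]

lemma zeta_sq_mem (i : ℕ) (hi : 1 ≤ i) : (zeta i)^2 ∈ zetaSqIdeal :=
  Ideal.subset_span ⟨i, hi, rfl⟩

lemma sq_mem {a : R2} (ha : a ∈ zetaSqIdeal) : a^2 ∈ zetaSqIdeal := by
  rw [sq]; exact Ideal.mul_mem_left _ a ha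

lemma zeta_sub_X_and_sq : ∀ k, 1 ≤ k →
    (zeta k - X k ∈ zetaSqIdeal ∧ (X k : R2)^2 ∈ zetaSqIdeal) := by
  intro k
  induction k using Nat.strong_induction_on with
  | _ k ih =>
  intro hk
  obtain ⟨s, rfl⟩ : ∃ s, k = s + 1 := ⟨k - 1, by omega⟩
  have hdiff : zeta (s+1) - X (s+1) ∈ zetaSqIdeal := by
    rw [zeta, Finset.sum_range_succ]
    have he : (∑ i ∈ Finset.range s, zeta (s - i) * (X (i+1) : R2)^(2^(s-i)))
        + zeta (s - s) * (X (s+1))^(2^(s-s)) - X (s+1)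
        = ∑ i ∈ Finset.range s, zeta (s - i) * (X (i+1))^(2^(s-i)) := by
      rw [Nat.sub_self]
      show _ + zeta 0 * _ ^ (2^0) - _ = _
      rw [zeta]; ring
    rw [he]
    refine Ideal.sum_mem _ fun i hi => ?_
    have hi' : i < s := Finset.mem_range.mp hi
    have hXsq : (X (i+1) : R2)^2 ∈ zetaSqIdeal := (ih (i+1) (by omega) (by omega)).2
    have hexp : 2^(s-i) = 2 * 2^(s-i-1) := by
      conv_lhs => rw [show s - i = (s - i - 1) + 1 from by omega]
      rw [pow_succ]; ring
    have hp : (X (i+1) : R2)^(2^(s-i)) = ((X (i+1))^2)^(2^(s-i-1)) := by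
      rw [hexp, pow_mul]
    rw [hp]
    exact Ideal.mul_mem_left _ _ (Ideal.pow_mem_of_mem _ hXsq _ (by positivity))
  refine ⟨hdiff, ?_⟩
  have hx : (X (s+1) : R2)^2 = zeta (s+1)^2 + (zeta (s+1) - X (s+1))^2
      - 2 * (zeta (s+1) * (zeta (s+1) - X (s+1))) := by ring
  rw [hx, R2.two_eq_zero, zero_mul, sub_zero]
  exact Ideal.add_mem _ (zeta_sq_mem _ (by omega)) (sq_mem hdiff)

lemma xiSub_sq_mem (m : ℕ) : (xiSub m)^2 ∈ zetaSqIdeal := by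
  rw [xiSub]
  split
  · next h => exact (zeta_sub_X_and_sq h.choose h.choose_spec.1).2
  · rw [zero_pow (by norm_num)]; exact Ideal.zero_mem _

lemma Zt_sub_xiSub (m : ℕ) : Zt m - xiSub m ∈ zetaSqIdeal := by
  by_cases h : ∃ r, 1 ≤ r ∧ m = 2 ^ r - 1
  · rw [Zt, xiSub, dif_pos h, dif_pos h]
    exact (zeta_sub_X_and_sq h.choose h.choose_spec.1).1
  · rw [Zt_zero h, xiSub_zero h, sub_zero]; exact Ideal.zero_mem _

lemma Nxi_zero : Nxi 0 = 0 := by rw [Nxi, newton, map_zero]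

lemma Nxi_succ (n : ℕ) :
    Nxi (n+1) = (∑ i ∈ Finset.range n, xiSub (i+1) * Nxi (n-i))
      + ((n+1 : ℕ) : R2) * xiSub (n+1) := by
  rw [Nxi, newton, map_add, map_sum]
  congr 1
  · refine Finset.sum_congr rfl fun i _ => ?_
    rw [map_mul, map_mul, map_pow, map_neg, map_one, aeval_X, R2.neg_one, one_pow, one_mul]
    rfl
  · rw [map_mul, map_mul, map_pow, map_neg, map_one, aeval_X, R2.neg_one, one_pow, one_mul,
      map_natCast]

lemma key_lemma : ∀ n, Nxi n - Zt n ∈ zetaSqIdeal := by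
  intro n
  induction n using Nat.strong_induction_on with
  | _ n ih =>
  cases n with
  | zero =>
    have h0 : Zt 0 = 0 := Zt_zero (not_pow_of_even (by norm_num))
    rw [Nxi_zero, h0, sub_zero]; exact Ideal.zero_mem _
  | succ n =>
    have hsum : (∑ i ∈ Finset.range n, xiSub (i+1) * (Nxi (n-i) - Zt (n-i)))
        + ((∑ i ∈ Finset.range n, xiSub (i+1) * (Zt (n-i) - xiSub (n-i)))
        + (∑ i ∈ Finset.range n, xiSub (i+1) * xiSub (n-i)))
        = ∑ i ∈ Finset.range n, xiSub (i+1) * Nxi (n-i) := by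
      rw [← Finset.sum_add_distrib, ← Finset.sum_add_distrib]
      exact Finset.sum_congr rfl fun i _ => by ring
    have expand : Nxi (n+1) - Zt (n+1)
        = (∑ i ∈ Finset.range n, xiSub (i+1) * (Nxi (n-i) - Zt (n-i)))
        + (∑ i ∈ Finset.range n, xiSub (i+1) * (Zt (n-i) - xiSub (n-i)))
        + ((∑ i ∈ Finset.range n, xiSub (i+1) * xiSub (n-i))
            + ((n+1 : ℕ) : R2) * xiSub (n+1) - Zt (n+1)) := by
      rw [Nxi_succ, ← hsum]; ring
    rw [expand]
    refine Ideal.add_mem _ (Ideal.add_mem _ ?_ ?_) ?_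
    · exact Ideal.sum_mem _ fun i _ => Ideal.mul_mem_left _ _ (ih (n-i) (by omega))
    · exact Ideal.sum_mem _ fun i _ => Ideal.mul_mem_left _ _ (Zt_sub_xiSub _)
    · -- the combinatorial part
      rcases Nat.even_or_odd n with he | ho
      · -- n even : the symmetric sum vanishes
        obtain ⟨t, ht⟩ := he
        have hU : (∑ i ∈ Finset.range n, xiSub (i+1) * xiSub (n-i)) = 0 := by
          refine Finset.sum_involution (fun a _ => n - 1 - a) (fun a ha => ?_)
            (fun a ha _ => ?_) (fun a ha => ?_) (fun a ha => ?_)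
          · have ha' : a < n := Finset.mem_range.mp ha
            have h1 : n - 1 - a + 1 = n - a := by omega
            have h2 : n - (n - 1 - a) = a + 1 := by omega
            rw [h1, h2, mul_comm]
            exact CharTwo.add_self_eq_zero _
          · have ha' : a < n := Finset.mem_range.mp ha
            show n - 1 - a ≠ a
            omega
          · have ha' : a < n := Finset.mem_range.mp ha
            show n - 1 - a ∈ Finset.range n
            exact Finset.mem_range.mpr (by omega)
          · have ha' : a < n := Finset.mem_range.mp ha
            show n - 1 - (n - 1 - a) = a
            omega
        rw [hU, zero_add]
        by_cases hm : ∃ m, 1 ≤ m ∧ n + 1 = 2 ^ m - 1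
        · obtain ⟨m, hm1, hm2⟩ := hm
          have hc : ((n+1 : ℕ) : R2) = 1 := by
            have : ((n+1 : ℕ) : R2) = (t : R2) + (t : R2) + 1 := by
              rw [ht]; push_cast; ring
            rw [this, CharTwo.add_self_eq_zero, zero_add]
          rw [hc, one_mul, hm2, xiSub_pow m hm1, Zt_pow m hm1]
          have hsub : (X m : R2) - zeta m = -(zeta m - X m) := by ring
          rw [hsub]
          exact neg_mem (zeta_sub_X_and_sq m hm1).1
        · rw [xiSub_zero hm, Zt_zero hm]
          simpa using Ideal.zero_mem zetaSqIdeal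
      · -- n odd : only the middle term survives, and it is a square
        obtain ⟨k, hk⟩ := ho
        have hx1 : xiSub (n+1) = 0 := xiSub_even ⟨k+1, by omega⟩
        have hz1 : Zt (n+1) = 0 := Zt_zero (not_pow_of_even ⟨k+1, by omega⟩)
        rw [hx1, hz1, mul_zero, add_zero, sub_zero]
        have hkmem : k ∈ Finset.range n := Finset.mem_range.mpr (by omega)
        rw [← Finset.insert_erase hkmem, Finset.sum_insert (Finset.notMem_erase _ _)]
        have hrest : (∑ i ∈ (Finset.range n).erase k, xiSub (i+1) * xiSub (n-i)) = 0 := by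
          refine Finset.sum_involution (fun a _ => n - 1 - a) (fun a ha => ?_)
            (fun a ha _ => ?_) (fun a ha => ?_) (fun a ha => ?_)
          · have ha' : a < n := Finset.mem_range.mp (Finset.mem_of_mem_erase ha)
            have h1 : n - 1 - a + 1 = n - a := by omega
            have h2 : n - (n - 1 - a) = a + 1 := by omega
            rw [h1, h2, mul_comm]
            exact CharTwo.add_self_eq_zero _
          · have ha' : a < n := Finset.mem_range.mp (Finset.mem_of_mem_erase ha)
            have hak : a ≠ k := Finset.ne_of_mem_erase ha
            show n - 1 - a ≠ a
            omega
          · have ha' : a < n := Finset.mem_range.mp (Finset.mem_of_mem_erase ha)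
            have hak : a ≠ k := Finset.ne_of_mem_erase ha
            show n - 1 - a ∈ (Finset.range n).erase k
            exact Finset.mem_erase.mpr ⟨by omega, Finset.mem_range.mpr (by omega)⟩
          · have ha' : a < n := Finset.mem_range.mp (Finset.mem_of_mem_erase ha)
            show n - 1 - (n - 1 - a) = a
            omega
        rw [hrest, add_zero]
        have hmid : n - k = k + 1 := by omega
        rw [hmid, ← sq]
        exact xiSub_sq_mem _

/-- For `p = 2` and every `n ≥ 1`, in `F_2[ξ_1, ξ_2, …]` modulo the ideal
generated by `{ζ_i² : i ≥ 1}`, one has `N_n(ξ) ≡ ζ_m` if `n = 2^m − 1` for some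
`m ≥ 1`, and `N_n(ξ) ≡ 0` otherwise. -/
theorem Nxi_mod_squares (n : ℕ) (hn : 1 ≤ n) :
    (∀ m, 1 ≤ m → n = 2 ^ m - 1 → Nxi n - zeta m ∈ zetaSqIdeal) ∧
    ((¬ ∃ m, 1 ≤ m ∧ n = 2 ^ m - 1) → Nxi n ∈ zetaSqIdeal) := by
  constructor
  · intro m hm hnm
    have hz : Zt n = zeta m := by rw [hnm]; exact Zt_pow m hm
    have := key_lemma n
    rwa [hz] at this
  · intro h
    have := key_lemma n
    rwa [Zt_zero h, sub_zero] at this
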